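/- arXiv:1606.02377 — 4 statements merged into one kernel-verified Lean document; each statement's English description precedes it below -/
import Mathlib

section
/- Let n ≥ 1 and let T = (T^{kl}_{ij}) (i,j,k,l = 1,…,n) be a real array symmetric in the pair (i,j) and in the pair (k,l). Set Q(ξ,η) = Σ_{i,j,k,l} T^{kl}_{ij} ξ_i ξ_j η_k η_l and Λ = sup{ |Σ_{i,j,k,l} T^{kl}_{ij} a_i b_j η_k η_l| : a,b,η ∈ ℝ^n, |a| = |b| = |η| = 1 }. If Q(ξ,η) ≥ 0 for all ξ, η ∈ ℝ^n with ξ·η = 0, then Q(ξ,η) ≥ −3Λ|ξ||η||ξ·η| for all ξ, η ∈ ℝ^n. (This is the equivalent quantitative form of the regularity (co-dimension one convexity) condition used in inequality (2.2) of the paper.) -/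
/-!
For fixed `η`, `(a, b) ↦ T(a, b, η, η)` is a symmetric bilinear form `B`
bounded by `Λ |η|²`.
Write `ξ = ξ' + t η` with `ξ' ⊥ η`. Then
`Q(ξ, η) = B(ξ', ξ') + 2 t B(ξ', η) + t² B(η, η)`, the first term is nonnegative by regularity,
and since `|t| |η|² = |ξ·η| ≤ |ξ| |η|` and `|ξ'| ≤ |ξ|`, the other two are at least
`-2Λ |ξ| |η| |ξ·η|` and `-Λ |ξ| |η| |ξ·η|`.
-/

open scoped BigOperators RealInnerProductSpace

namespace LinearMap.BilinForm.IsSymm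

variable {E : Type*} [NormedAddCommGroup E] [InnerProductSpace ℝ E]
  {B : LinearMap.BilinForm ℝ E} {L : ℝ}

theorem neg_three_mul_le_apply_self_of_norm_eq_one (hB : B.IsSymm)
    (hL : ∀ x y, |B x y| ≤ L * ‖x‖ * ‖y‖) {u : E} (hu : ‖u‖ = 1)
    (hpos : ∀ x, ⟪x, u⟫ = 0 → 0 ≤ B x x) (x : E) :
    -(3 * L * ‖x‖ * |⟪x, u⟫|) ≤ B x x := by
  set d := ⟪x, u⟫
  set y := x - d • u
  have hy : ⟪y, u⟫ = 0 := by simp [y, inner_sub_left, real_inner_smul_left, hu, d]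
  have hx : x = y + d • u := by simp [y]
  have hexpand : B x x = B y y + 2 * d * B y u + d ^ 2 * B u u := by
    rw [hx]
    simp only [map_add, map_smul, LinearMap.add_apply, LinearMap.smul_apply, smul_eq_mul,
      hB.eq u y]
    ring
  have hL0 : 0 ≤ L := by simpa [hu] using (abs_nonneg _).trans (hL u u)
  have hd : |d| ≤ ‖x‖ := by simpa [hu] using abs_real_inner_le_norm x u
  have hyx : ‖y‖ ≤ ‖x‖ := by
    have h := norm_add_sq_eq_norm_sq_add_norm_sq_real
      (x := y) (y := d • u) (by simp [real_inner_smul_right, hy])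
    rw [← hx] at h
    nlinarith [norm_nonneg y, norm_nonneg x, norm_nonneg (d • u)]
  have hcross : |2 * d * B y u| ≤ 2 * L * ‖x‖ * |d| := by
    calc |2 * d * B y u| = 2 * |d| * |B y u| := by rw [abs_mul, abs_mul, abs_two]
      _ ≤ 2 * |d| * (L * ‖x‖ * 1) := by
        gcongr
        exact (hL y u).trans (by rw [hu]; gcongr)
      _ = 2 * L * ‖x‖ * |d| := by ring
  have hquad : |d ^ 2 * B u u| ≤ L * ‖x‖ * |d| := by
    calc |d ^ 2 * B u u| = |d| * |d| * |B u u| := by rw [abs_mul, abs_pow, sq]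
      _ ≤ ‖x‖ * |d| * (L * 1 * 1) := by
        gcongr
        simpa [hu] using hL u u
      _ = L * ‖x‖ * |d| := by ring
  rw [hexpand]
  linarith [hpos y hy, neg_abs_le (2 * d * B y u), neg_abs_le (d ^ 2 * B u u)]

theorem neg_three_mul_le_apply_self (hB : B.IsSymm) {v : E}
    (hL : ∀ x y, |B x y| ≤ L * ‖x‖ * ‖y‖ * ‖v‖ ^ 2) (hv : v ≠ 0)
    (hpos : ∀ x, ⟪x, v⟫ = 0 → 0 ≤ B x x) (x : E) :
    -(3 * L * ‖x‖ * ‖v‖ * |⟪x, v⟫|) ≤ B x x := by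
  have hv' : 0 < ‖v‖ := norm_pos_iff.mpr hv
  have h := neg_three_mul_le_apply_self_of_norm_eq_one hB
    (L := L * ‖v‖ ^ 2) (fun x y => by linarith [hL x y]) (u := ‖v‖⁻¹ • v)
    (by rw [norm_smul, norm_inv, norm_norm, inv_mul_cancel₀ hv'.ne'])
    (fun x hx => hpos x (by simpa [real_inner_smul_right, hv'.ne'] using hx)) x
  rwa [real_inner_smul_right, abs_mul, abs_inv, abs_norm, show
    3 * (L * ‖v‖ ^ 2) * ‖x‖ * (‖v‖⁻¹ * |⟪x, v⟫|) = 3 * L * ‖x‖ * ‖v‖ * |⟪x, v⟫| by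
      field_simp] at h

end LinearMap.BilinForm.IsSymm

namespace EuclideanSpace

variable {n : ℕ}

theorem norm_toLp_eq_sqrt_sum_sq (a : Fin n → ℝ) : ‖WithLp.toLp 2 a‖ = √(∑ i, a i ^ 2) := by
  simp [EuclideanSpace.norm_eq]

theorem inner_toLp_eq_sum_mul (a b : Fin n → ℝ) :
    ⟪WithLp.toLp 2 a, WithLp.toLp 2 b⟫ = ∑ i, a i * b i := by
  simp [EuclideanSpace.inner_toLp_toLp, dotProduct, mul_comm]

end EuclideanSpace

section Tensor

variable {n : ℕ} (T : Fin n → Fin n → Fin n → Fin n → ℝ)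

noncomputable def tensorBilin (c : EuclideanSpace ℝ (Fin n)) :
    LinearMap.BilinForm ℝ (EuclideanSpace ℝ (Fin n)) :=
  LinearMap.mk₂ ℝ (fun a b => ∑ i, ∑ j, ∑ k, ∑ l, T i j k l * a i * b j * c k * c l)
    (fun a a' b => by simp only [PiLp.add_apply, mul_add, add_mul, Finset.sum_add_distrib])
    (fun r a b => by
      simp only [PiLp.smul_apply, smul_eq_mul, Finset.mul_sum, mul_assoc, mul_left_comm r])
    (fun a b b' => by simp only [PiLp.add_apply, mul_add, add_mul, Finset.sum_add_distrib])
    (fun r a b => by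
      simp only [PiLp.smul_apply, smul_eq_mul, Finset.mul_sum, mul_assoc, mul_left_comm r])

theorem tensorBilin_apply (c a b : EuclideanSpace ℝ (Fin n)) :
    tensorBilin T c a b = ∑ i, ∑ j, ∑ k, ∑ l, T i j k l * a i * b j * c k * c l := rfl

theorem isSymm_tensorBilin (hsym : ∀ i j k l, T i j k l = T j i k l)
    (c : EuclideanSpace ℝ (Fin n)) : (tensorBilin T c).IsSymm := by
  refine ⟨fun a b => ?_⟩
  rw [tensorBilin_apply, tensorBilin_apply, Finset.sum_comm]
  simp only [hsym _ _ _ _, mul_right_comm _ (a _) (b _)]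

theorem tensorBilin_smul (r : ℝ) (c a b : EuclideanSpace ℝ (Fin n)) :
    tensorBilin T (r • c) a b = r ^ 2 * tensorBilin T c a b := by
  simp only [tensorBilin_apply, PiLp.smul_apply, smul_eq_mul, Finset.mul_sum]
  refine Finset.sum_congr rfl fun _ _ => Finset.sum_congr rfl fun _ _ =>
    Finset.sum_congr rfl fun _ _ => Finset.sum_congr rfl fun _ _ => by ring

theorem abs_tensorBilin_le_sum_abs (c a b : EuclideanSpace ℝ (Fin n)) :
    |tensorBilin T c a b| ≤ (∑ i, ∑ j, ∑ k, ∑ l, |T i j k l|) * ‖a‖ * ‖b‖ * ‖c‖ ^ 2 := by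
  simp only [tensorBilin_apply, Finset.sum_mul]
  refine (Finset.abs_sum_le_sum_abs _ _).trans (Finset.sum_le_sum fun i _ => ?_)
  refine (Finset.abs_sum_le_sum_abs _ _).trans (Finset.sum_le_sum fun j _ => ?_)
  refine (Finset.abs_sum_le_sum_abs _ _).trans (Finset.sum_le_sum fun k _ => ?_)
  refine (Finset.abs_sum_le_sum_abs _ _).trans (Finset.sum_le_sum fun l _ => ?_)
  have hcoord : ∀ (x : EuclideanSpace ℝ (Fin n)) i, |x i| ≤ ‖x‖ := PiLp.norm_apply_le
  simp only [abs_mul, sq, ← mul_assoc]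
  gcongr <;> apply hcoord

noncomputable def tensorSup : ℝ :=
  sSup {s : ℝ | ∃ a b c : Fin n → ℝ,
    √(∑ i, a i ^ 2) = 1 ∧ √(∑ i, b i ^ 2) = 1 ∧ √(∑ i, c i ^ 2) = 1 ∧
    s = |∑ i, ∑ j, ∑ k, ∑ l, T i j k l * a i * b j * c k * c l|}

theorem abs_tensorBilin_le_tensorSup_of_norm_eq_one {a b c : EuclideanSpace ℝ (Fin n)}
    (ha : ‖a‖ = 1) (hb : ‖b‖ = 1) (hc : ‖c‖ = 1) : |tensorBilin T c a b| ≤ tensorSup T := by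
  simp only [EuclideanSpace.norm_eq, Real.norm_eq_abs, sq_abs] at ha hb hc
  refine le_csSup ⟨∑ i, ∑ j, ∑ k, ∑ l, |T i j k l|, ?_⟩ ⟨_, _, _, ha, hb, hc, rfl⟩
  rintro s ⟨a, b, c, ha, hb, hc, rfl⟩
  have h := abs_tensorBilin_le_sum_abs T (WithLp.toLp 2 c) (WithLp.toLp 2 a) (WithLp.toLp 2 b)
  simp only [EuclideanSpace.norm_toLp_eq_sqrt_sum_sq, ha, hb, hc, one_pow, mul_one] at h
  exact h

theorem abs_tensorBilin_le_tensorSup (c a b : EuclideanSpace ℝ (Fin n)) :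
    |tensorBilin T c a b| ≤ tensorSup T * ‖a‖ * ‖b‖ * ‖c‖ ^ 2 := by
  rcases eq_or_ne a 0 with rfl | ha
  · simp
  rcases eq_or_ne b 0 with rfl | hb
  · simp
  rcases eq_or_ne c 0 with rfl | hc
  · simp [tensorBilin_apply]
  have hunit : ∀ x : EuclideanSpace ℝ (Fin n), x ≠ 0 → ‖‖x‖⁻¹ • x‖ = 1 := fun x hx => by
    rw [norm_smul, norm_inv, norm_norm, inv_mul_cancel₀ (norm_ne_zero_iff.mpr hx)]
  have hpos : 0 < ‖a‖ * ‖b‖ * ‖c‖ ^ 2 := by positivity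
  have h := abs_tensorBilin_le_tensorSup_of_norm_eq_one T (hunit a ha) (hunit b hb) (hunit c hc)
  have hscale : tensorBilin T (‖c‖⁻¹ • c) (‖a‖⁻¹ • a) (‖b‖⁻¹ • b)
      = (‖a‖ * ‖b‖ * ‖c‖ ^ 2)⁻¹ * tensorBilin T c a b := by
    simp only [tensorBilin_smul, map_smul, LinearMap.smul_apply, smul_eq_mul]
    ring
  rw [hscale, abs_mul, abs_inv, abs_of_pos hpos, inv_mul_le_iff₀ hpos] at h
  linarith

end Tensor

theorem regular_implies_quantitative_lower_bound_general
    (n : ℕ)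
    (T : Fin n → Fin n → Fin n → Fin n → ℝ)
    (hsym₁ : ∀ i j k l, T i j k l = T j i k l)
    (Q : (Fin n → ℝ) → (Fin n → ℝ) → ℝ)
    (hQ : ∀ ξ η, Q ξ η = ∑ i, ∑ j, ∑ k, ∑ l, T i j k l * ξ i * ξ j * η k * η l)
    (Λ : ℝ)
    (hΛ : Λ = sSup {s : ℝ | ∃ a b η : Fin n → ℝ,
        Real.sqrt (∑ i, a i ^ 2) = 1 ∧ Real.sqrt (∑ i, b i ^ 2) = 1 ∧
        Real.sqrt (∑ i, η i ^ 2) = 1 ∧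
        s = |∑ i, ∑ j, ∑ k, ∑ l, T i j k l * a i * b j * η k * η l|})
    (hreg : ∀ ξ η : Fin n → ℝ, (∑ i, ξ i * η i) = 0 → 0 ≤ Q ξ η) :
    ∀ ξ η : Fin n → ℝ,
      -(3 * Λ * Real.sqrt (∑ i, ξ i ^ 2) * Real.sqrt (∑ i, η i ^ 2) *
          |∑ i, ξ i * η i|) ≤ Q ξ η := by
  intro ξ η
  rcases eq_or_ne η 0 with rfl | hη
  · simpa using hreg ξ 0 (by simp)
  have hΛT : Λ = tensorSup T := hΛ
  subst hΛT
  set v := WithLp.toLp 2 η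
  have hQB : ∀ ξ, Q ξ η = tensorBilin T v (WithLp.toLp 2 ξ) (WithLp.toLp 2 ξ) := fun ξ => hQ ξ η
  have hpos : ∀ x, ⟪x, v⟫ = 0 → 0 ≤ tensorBilin T v x x := fun x hx =>
    hQB x.ofLp ▸ hreg x.ofLp η (EuclideanSpace.inner_toLp_eq_sum_mul x.ofLp η ▸ hx)
  have h := (isSymm_tensorBilin T hsym₁ v).neg_three_mul_le_apply_self
    (abs_tensorBilin_le_tensorSup T v) (by simpa [v] using hη) hpos (WithLp.toLp 2 ξ)
  simpa only [v, EuclideanSpace.norm_toLp_eq_sqrt_sum_sq, EuclideanSpace.inner_toLp_eq_sum_mul,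
    ← hQB] using h

/-- the equivalent quantitative form of the regularity
(co-dimension one convexity) condition. -/
theorem regular_implies_quantitative_lower_bound
    (n : ℕ) (hn : 1 ≤ n)
    (T : Fin n → Fin n → Fin n → Fin n → ℝ)
    (hsym₁ : ∀ i j k l, T i j k l = T j i k l)
    (hsym₂ : ∀ i j k l, T i j k l = T i j l k)
    (Q : (Fin n → ℝ) → (Fin n → ℝ) → ℝ)
    (hQ : ∀ ξ η, Q ξ η = ∑ i, ∑ j, ∑ k, ∑ l, T i j k l * ξ i * ξ j * η k * η l)
    (Λ : ℝ)
    (hΛ : Λ = sSup {s : ℝ | ∃ a b η : Fin n → ℝ,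
        Real.sqrt (∑ i, a i ^ 2) = 1 ∧ Real.sqrt (∑ i, b i ^ 2) = 1 ∧
        Real.sqrt (∑ i, η i ^ 2) = 1 ∧
        s = |∑ i, ∑ j, ∑ k, ∑ l, T i j k l * a i * b j * η k * η l|})
    (hreg : ∀ ξ η : Fin n → ℝ, (∑ i, ξ i * η i) = 0 → 0 ≤ Q ξ η) :
    ∀ ξ η : Fin n → ℝ,
      -(3 * Λ * Real.sqrt (∑ i, ξ i ^ 2) * Real.sqrt (∑ i, η i ^ 2) *
          |∑ i, ξ i * η i|) ≤ Q ξ η :=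
  regular_implies_quantitative_lower_bound_general n T hsym₁ Q hQ Λ hΛ hreg
end

section
/- Let n ≥ 1, λ̄ ≥ 0, and let T = (T^{kl}_{ij}) be a real array symmetric in (i,j) and in (k,l) such that Σ_{i,j,k,l} T^{kl}_{ij} ξ_i ξ_j η_k η_l ≥ −2λ̄|ξ||η||ξ·η| for all ξ, η ∈ ℝ^n. Then for every positive semidefinite symmetric matrix F = (F^{ij}), every η ∈ ℝ^n and every ε > 0, one has Σ_{i,j,k,l} F^{ij} T^{kl}_{ij} η_k η_l ≥ −λ̄ ( ε · tr(F) · |η|² + (1/ε) · Σ_{i,j} F^{ij} η_i η_j ). (Inequality (2.3) of the paper.) -/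
/-!
For fixed `η` and `ε > 0`, regularity together with `2xy ≤ εx² + y²/ε` says that the matrix
`S = T(·,·,η,η) + λ̄ (ε |η|² I + ε⁻¹ η ηᵀ)` defines a nonnegative quadratic form. Pairing it with a
positive semidefinite `F = ∑ᵣ vᵣ vᵣᵀ` gives `∑ᵣ vᵣᵀ S vᵣ ≥ 0`, which is the inequality.
-/

open Finset

variable {ι : Type*} [Fintype ι]

theorem two_mul_le_mul_sq_add_one_div_mul_sq {ε : ℝ} (hε : 0 < ε) (x y : ℝ) :
    2 * x * y ≤ ε * x ^ 2 + 1 / ε * y ^ 2 := by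
  have h : 0 ≤ (ε * x - y) ^ 2 / ε := by positivity
  calc 2 * x * y = ε * x ^ 2 + 1 / ε * y ^ 2 - (ε * x - y) ^ 2 / ε := by field_simp; ring
    _ ≤ _ := by linarith

theorem two_mul_sqrt_mul_sqrt_mul_abs_le {a b ε : ℝ} (ha : 0 ≤ a) (hb : 0 ≤ b) (hε : 0 < ε)
    (c : ℝ) : 2 * √a * √b * |c| ≤ ε * (a * b) + 1 / ε * c ^ 2 := by
  have h := two_mul_le_mul_sq_add_one_div_mul_sq hε (√a * √b) |c|
  rwa [mul_pow, Real.sq_sqrt ha, Real.sq_sqrt hb, sq_abs, ← mul_assoc] at h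

theorem Matrix.PosSemidef.sum_sum_mul_nonneg {F : Matrix ι ι ℝ} (hF : F.PosSemidef)
    {S : ι → ι → ℝ} (hS : ∀ ξ : ι → ℝ, 0 ≤ ∑ i, ∑ j, S i j * ξ i * ξ j) :
    0 ≤ ∑ i, ∑ j, F i j * S i j := by
  obtain ⟨m, v, rfl⟩ := posSemidef_iff_eq_sum_vecMulVec.mp hF
  calc 0 ≤ ∑ r, ∑ i, ∑ j, S i j * v r i * v r j := sum_nonneg fun r _ => hS (v r)
    _ = _ := by
      simp only [Matrix.sum_apply, Matrix.vecMulVec_apply, star_trivial, sum_mul]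
      rw [sum_comm]
      refine sum_congr rfl fun i _ => ?_
      rw [sum_comm]
      exact sum_congr rfl fun j _ => sum_congr rfl fun r _ => by ring

def IsRegularWith (lam : ℝ) (T : ι → ι → ι → ι → ℝ) : Prop :=
  ∀ ξ η : ι → ℝ, -(2 * lam * √(∑ i, ξ i ^ 2) * √(∑ i, η i ^ 2) * |∑ i, ξ i * η i|) ≤
    ∑ i, ∑ j, ∑ k, ∑ l, T i j k l * ξ i * ξ j * η k * η l

section RegularizedContraction

variable [DecidableEq ι]

noncomputable def regularizedContraction (T : ι → ι → ι → ι → ℝ) (lam ε : ℝ) (η : ι → ℝ)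
    (i j : ι) : ℝ :=
  ∑ k, ∑ l, T i j k l * η k * η l +
    lam * (ε * (∑ k, η k ^ 2) * (1 : Matrix ι ι ℝ) i j + 1 / ε * η i * η j)

theorem sum_sum_regularizedContraction_mul_mul (T : ι → ι → ι → ι → ℝ) (lam ε : ℝ)
    (η ξ : ι → ℝ) :
    ∑ i, ∑ j, regularizedContraction T lam ε η i j * ξ i * ξ j =
      ∑ i, ∑ j, ∑ k, ∑ l, T i j k l * ξ i * ξ j * η k * η l +
        lam * (ε * (∑ i, ξ i ^ 2) * (∑ i, η i ^ 2) + 1 / ε * (∑ i, ξ i * η i) ^ 2) := by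
  simp only [regularizedContraction, Matrix.one_apply, sq, mul_add, add_mul, mul_ite, ite_mul,
    mul_one, mul_zero, zero_mul, sum_add_distrib, sum_ite_eq, mem_univ, if_true, sum_mul, mul_sum]
  rw [sum_comm (f := fun x i => lam * (ε * (η i * η i)) * ξ x * ξ x)]
  simp only [mul_comm, mul_left_comm, mul_assoc]

theorem sum_sum_mul_regularizedContraction (T : ι → ι → ι → ι → ℝ) (lam ε : ℝ) (η : ι → ℝ)
    (F : Matrix ι ι ℝ) :
    ∑ i, ∑ j, F i j * regularizedContraction T lam ε η i j =
      ∑ i, ∑ j, ∑ k, ∑ l, F i j * T i j k l * η k * η l +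
        lam * (ε * F.trace * (∑ i, η i ^ 2) + 1 / ε * ∑ i, ∑ j, F i j * η i * η j) := by
  simp only [regularizedContraction, Matrix.one_apply, mul_add, mul_ite, mul_one, mul_zero,
    sum_add_distrib, sum_ite_eq, mem_univ, if_true, sum_mul, mul_sum, Matrix.trace, Matrix.diag]
  rw [sum_comm (f := fun x i => F x x * (lam * (ε * η i ^ 2)))]
  simp only [mul_comm, mul_left_comm, mul_assoc]

theorem IsRegularWith.sum_sum_regularizedContraction_mul_mul_nonneg {lam ε : ℝ}
    {T : ι → ι → ι → ι → ℝ} (hT : IsRegularWith lam T) (hlam : 0 ≤ lam) (hε : 0 < ε)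
    (η ξ : ι → ℝ) : 0 ≤ ∑ i, ∑ j, regularizedContraction T lam ε η i j * ξ i * ξ j := by
  have hamgm := two_mul_sqrt_mul_sqrt_mul_abs_le (a := ∑ i, ξ i ^ 2) (b := ∑ i, η i ^ 2)
    (by positivity) (by positivity) hε (∑ i, ξ i * η i)
  rw [sum_sum_regularizedContraction_mul_mul]
  nlinarith [hT ξ η, mul_le_mul_of_nonneg_left hamgm hlam]

end RegularizedContraction

theorem regular_contraction_inequality_general
    (n : ℕ)
    (lam : ℝ) (hlam : 0 ≤ lam)
    (T : Fin n → Fin n → Fin n → Fin n → ℝ)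
    (hreg : ∀ ξ η : Fin n → ℝ,
      -(2 * lam * Real.sqrt (∑ i, ξ i ^ 2) * Real.sqrt (∑ i, η i ^ 2) *
          |∑ i, ξ i * η i|) ≤
        ∑ i, ∑ j, ∑ k, ∑ l, T i j k l * ξ i * ξ j * η k * η l) :
    ∀ F : Matrix (Fin n) (Fin n) ℝ, F.PosSemidef →
      ∀ η : Fin n → ℝ, ∀ ε : ℝ, 0 < ε →
        -(lam * (ε * Matrix.trace F * (∑ i, η i ^ 2) +
            (1 / ε) * ∑ i, ∑ j, F i j * η i * η j)) ≤
          ∑ i, ∑ j, ∑ k, ∑ l, F i j * T i j k l * η k * η l := by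
  intro F hF η ε hε
  have hS := hF.sum_sum_mul_nonneg
    (IsRegularWith.sum_sum_regularizedContraction_mul_mul_nonneg hreg hlam hε η)
  rw [sum_sum_mul_regularizedContraction] at hS
  linarith

/-- inequality (2.3) of the paper. -/
theorem regular_contraction_inequality
    (n : ℕ) (hn : 1 ≤ n)
    (lam : ℝ) (hlam : 0 ≤ lam)
    (T : Fin n → Fin n → Fin n → Fin n → ℝ)
    (hsym₁ : ∀ i j k l, T i j k l = T j i k l)
    (hsym₂ : ∀ i j k l, T i j k l = T i j l k)
    (hreg : ∀ ξ η : Fin n → ℝ,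
      -(2 * lam * Real.sqrt (∑ i, ξ i ^ 2) * Real.sqrt (∑ i, η i ^ 2) *
          |∑ i, ξ i * η i|) ≤
        ∑ i, ∑ j, ∑ k, ∑ l, T i j k l * ξ i * ξ j * η k * η l) :
    ∀ F : Matrix (Fin n) (Fin n) ℝ, F.PosSemidef →
      ∀ η : Fin n → ℝ, ∀ ε : ℝ, 0 < ε →
        -(lam * (ε * Matrix.trace F * (∑ i, η i ^ 2) +
            (1 / ε) * ∑ i, ∑ j, F i j * η i * η j)) ≤
          ∑ i, ∑ j, ∑ k, ∑ l, F i j * T i j k l * η k * η l :=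
  regular_contraction_inequality_general n lam hlam T hreg
end

section
/- Let n ≥ 1, λ̄ ≥ 0, and let T = (T^{kl}_{ij}) be a real array symmetric in (i,j) and in (k,l) such that Σ T^{kl}_{ij} ξ_i ξ_j η_k η_l ≥ −2λ̄|ξ||η||ξ·η| for all ξ, η ∈ ℝ^n. Then for every positive semidefinite symmetric matrix F = (F^{ij}), every q ∈ ℝ^n, every δ̄ > 0 and every constant K ≥ λ̄²|q|²/(2δ̄), one has δ̄·tr(F) + (1/2)·Σ_{i,j,k,l} F^{ij} T^{kl}_{ij} q_k q_l + K·Σ_{i,j} F^{ij} q_i q_j ≥ (δ̄/2)·tr(F). (This is the key absorption step, inequality (2.7), in the barrier construction of Section 2.) -/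
/-!
A positive semidefinite `F` is a sum of rank-one matrices `v vᵀ`, and the left-hand side minus
`(δ̄/2) tr F` is linear in `F`, so it suffices to treat `F = v vᵀ`. There the regularity bound with
`ξ = v`, `η = q` leaves `-λ̄ |v| |q| |v·q|`, which `δ̄/2 |v|² + K (v·q)²` absorbs by AM-GM because
`K ≥ λ̄² |q|² / (2δ̄)`.
-/

open Finset

theorem Matrix.PosSemidef.sum_mul_nonneg {ι : Type*} [Fintype ι] {F M : Matrix ι ι ℝ}
    (hF : F.PosSemidef) (hM : ∀ v : ι → ℝ, 0 ≤ ∑ i, ∑ j, M i j * v i * v j) :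
    0 ≤ ∑ i, ∑ j, F i j * M i j := by
  obtain ⟨m, v, rfl⟩ := Matrix.posSemidef_iff_eq_sum_vecMulVec.mp hF
  calc 0 ≤ ∑ r, ∑ i, ∑ j, M i j * v r i * v r j := sum_nonneg fun r _ => hM (v r)
    _ = _ := by
      simp only [Matrix.sum_apply, Matrix.vecMulVec_apply, star_trivial, sum_mul]
      rw [sum_comm]
      refine sum_congr rfl fun i _ => ?_
      rw [sum_comm]
      exact sum_congr rfl fun j _ => sum_congr rfl fun r _ => by ring

theorem mul_mul_mul_le_of_sq_mul_sq_div_le {lam a b c δ K : ℝ} (hδ : 0 < δ)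
    (hK : lam ^ 2 * b ^ 2 / (2 * δ) ≤ K) : lam * a * b * c ≤ δ / 2 * a ^ 2 + K * c ^ 2 := by
  rw [div_le_iff₀ (by positivity)] at hK
  nlinarith [sq_nonneg (δ * a - lam * b * c), mul_le_mul_of_nonneg_right hK (sq_nonneg c)]

theorem regular_form_absorbed {n : ℕ} {lam δ K : ℝ} {T : Fin n → Fin n → Fin n → Fin n → ℝ}
    {q : Fin n → ℝ}
    (hreg : ∀ ξ η : Fin n → ℝ,
      -(2 * lam * Real.sqrt (∑ i, ξ i ^ 2) * Real.sqrt (∑ i, η i ^ 2) *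
          |∑ i, ξ i * η i|) ≤
        ∑ i, ∑ j, ∑ k, ∑ l, T i j k l * ξ i * ξ j * η k * η l)
    (hδ : 0 < δ) (hK : lam ^ 2 * (∑ i, q i ^ 2) / (2 * δ) ≤ K) (v : Fin n → ℝ) :
    0 ≤ δ / 2 * ∑ i, v i ^ 2 + 1 / 2 * ∑ i, ∑ j, ∑ k, ∑ l, T i j k l * v i * v j * q k * q l +
      K * (∑ i, v i * q i) ^ 2 := by
  have hAMGM := mul_mul_mul_le_of_sq_mul_sq_div_le (lam := lam) (K := K)
    (a := √(∑ i, v i ^ 2)) (b := √(∑ i, q i ^ 2))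
    (c := |∑ i, v i * q i|) hδ (by rwa [Real.sq_sqrt (by positivity)])
  rw [Real.sq_sqrt (by positivity), sq_abs] at hAMGM
  linarith [hreg v q]

section RegularForm

variable {n : ℕ} (T : Fin n → Fin n → Fin n → Fin n → ℝ) (q : Fin n → ℝ) (δ K : ℝ)

noncomputable def regularFormMatrix : Matrix (Fin n) (Fin n) ℝ := fun i j =>
  δ / 2 * (1 : Matrix (Fin n) (Fin n) ℝ) i j + 1 / 2 * ∑ k, ∑ l, T i j k l * q k * q l +
    K * (q i * q j)

theorem sum_regularFormMatrix_mul_mul (v : Fin n → ℝ) :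
    ∑ i, ∑ j, regularFormMatrix T q δ K i j * v i * v j =
      δ / 2 * ∑ i, v i ^ 2 + 1 / 2 * ∑ i, ∑ j, ∑ k, ∑ l, T i j k l * v i * v j * q k * q l +
        K * (∑ i, v i * q i) ^ 2 := by
  simp only [regularFormMatrix, add_mul, sum_add_distrib, Matrix.one_apply, mul_ite, ite_mul,
    mul_one, mul_zero, zero_mul, sum_ite_eq, mem_univ, if_true, sq, mul_sum, sum_mul]
  simp only [mul_comm, mul_left_comm, mul_assoc, add_comm]

theorem sum_mul_regularFormMatrix (F : Matrix (Fin n) (Fin n) ℝ) :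
    ∑ i, ∑ j, F i j * regularFormMatrix T q δ K i j =
      δ / 2 * F.trace + 1 / 2 * ∑ i, ∑ j, ∑ k, ∑ l, F i j * T i j k l * q k * q l +
        K * ∑ i, ∑ j, F i j * q i * q j := by
  simp only [regularFormMatrix, mul_add, sum_add_distrib, Matrix.one_apply, mul_ite, mul_one,
    mul_zero, sum_ite_eq, mem_univ, if_true, mul_sum, Matrix.trace, Matrix.diag]
  simp only [mul_comm, mul_left_comm, mul_assoc, add_comm]

end RegularForm

theorem regular_absorption_inequality_general
    (n : ℕ)
    (lam : ℝ)
    (T : Fin n → Fin n → Fin n → Fin n → ℝ)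
    (hreg : ∀ ξ η : Fin n → ℝ,
      -(2 * lam * Real.sqrt (∑ i, ξ i ^ 2) * Real.sqrt (∑ i, η i ^ 2) *
          |∑ i, ξ i * η i|) ≤
        ∑ i, ∑ j, ∑ k, ∑ l, T i j k l * ξ i * ξ j * η k * η l) :
    ∀ F : Matrix (Fin n) (Fin n) ℝ, F.PosSemidef →
      ∀ q : Fin n → ℝ, ∀ δbar : ℝ, 0 < δbar →
        ∀ K : ℝ, lam ^ 2 * (∑ i, q i ^ 2) / (2 * δbar) ≤ K →
          (δbar / 2) * Matrix.trace F ≤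
            δbar * Matrix.trace F +
              (1 / 2) * (∑ i, ∑ j, ∑ k, ∑ l, F i j * T i j k l * q k * q l) +
              K * ∑ i, ∑ j, F i j * q i * q j := by
  intro F hF q δbar hδ K hK
  have hform : ∀ v : Fin n → ℝ, 0 ≤ ∑ i, ∑ j, regularFormMatrix T q δbar K i j * v i * v j := by
    intro v
    rw [sum_regularFormMatrix_mul_mul]
    exact regular_form_absorbed hreg hδ hK v
  have hpair := hF.sum_mul_nonneg hform
  rw [sum_mul_regularFormMatrix] at hpair
  linarith

/-- the key absorption step, inequality (2.7), in the barrier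
construction of Section 2. -/
theorem regular_absorption_inequality
    (n : ℕ) (hn : 1 ≤ n)
    (lam : ℝ) (hlam : 0 ≤ lam)
    (T : Fin n → Fin n → Fin n → Fin n → ℝ)
    (hsym₁ : ∀ i j k l, T i j k l = T j i k l)
    (hsym₂ : ∀ i j k l, T i j k l = T i j l k)
    (hreg : ∀ ξ η : Fin n → ℝ,
      -(2 * lam * Real.sqrt (∑ i, ξ i ^ 2) * Real.sqrt (∑ i, η i ^ 2) *
          |∑ i, ξ i * η i|) ≤
        ∑ i, ∑ j, ∑ k, ∑ l, T i j k l * ξ i * ξ j * η k * η l) :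
    ∀ F : Matrix (Fin n) (Fin n) ℝ, F.PosSemidef →
      ∀ q : Fin n → ℝ, ∀ δbar : ℝ, 0 < δbar →
        ∀ K : ℝ, lam ^ 2 * (∑ i, q i ^ 2) / (2 * δbar) ≤ K →
          (δbar / 2) * Matrix.trace F ≤
            δbar * Matrix.trace F +
              (1 / 2) * (∑ i, ∑ j, ∑ k, ∑ l, F i j * T i j k l * q k * q l) +
              K * ∑ i, ∑ j, F i j * q i * q j :=
  regular_absorption_inequality_general n lam T hreg
end

section
/- Let Ω ⊂ ℝ^n be a bounded C¹ domain with unit inner normal ν, let u ∈ C¹(Ω̄) with M = sup_Ω|u|, and let G ∈ C²(∂Ω×ℝ×ℝ^n) satisfy the uniform obliqueness (OB) with constant β₀ > 0 and the uniform tangential concavity (TC) with constant γ₀ > 0. If x ∈ ∂Ω and G(x, u(x), Du(x)) = 0, then D_ν u(x) ≥ −C where C = (1/β₀)·[ sup{|G(y,z,0)| : y ∈ ∂Ω, |z| ≤ M} + sup{|G_p(y,z,0)| : y ∈ ∂Ω, |z| ≤ M}² / (2γ₀) ]. (The boundary normal-derivative lower bound established by the second-order Taylor expansion in the proof of Lemma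 4.1.) -/
open scoped BigOperators

noncomputable section

noncomputable def pgrad (n : ℕ) (u : EuclideanSpace ℝ (Fin n) → ℝ)
    (x : EuclideanSpace ℝ (Fin n)) : Fin n → ℝ :=
  fun i => fderiv ℝ u x (EuclideanSpace.single i 1)

noncomputable def toEuc (n : ℕ) (v : Fin n → ℝ) : EuclideanSpace ℝ (Fin n) :=
  (EuclideanSpace.equiv (Fin n) ℝ).symm v

def IsUnitInnerNormal (n : ℕ) (Ω : Set (EuclideanSpace ℝ (Fin n)))
    (ν : EuclideanSpace ℝ (Fin n) → Fin n → ℝ) : Prop :=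
  (∀ x ∈ frontier Ω, (∑ i, ν x i ^ 2) = 1) ∧
  (∀ x ∈ frontier Ω, ∃ ε > 0, ∀ t : ℝ, 0 < t → t < ε → x + t • toEuc n (ν x) ∈ Ω) ∧
  (∀ x ∈ frontier Ω, ∀ γ : ℝ → EuclideanSpace ℝ (Fin n),
    (∀ t : ℝ, γ t ∈ frontier Ω) → γ 0 = x →
    ∀ w : EuclideanSpace ℝ (Fin n), HasDerivAt γ w 0 → (∑ i, w i * ν x i) = 0)

/-!
Write `φ = G(x, u(x), ·)` and split `p = Du(x)` as `p = τ + χ ν` with `τ` tangential and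
`χ = D_ν u(x)`; only `χ < 0` needs an argument. Moving from `τ` to `p` along the normal, (OB)
gives `0 = φ(p) ≤ φ(τ) + χ β₀`. Along the segment from `0` to `τ`, (TC) and Taylor's formula give
`φ(τ) ≤ φ(0) + Dφ(0) τ - γ₀ |τ|² / 2`, and Cauchy–Schwarz followed by
`a b - γ₀ b² / 2 ≤ a² / (2 γ₀)` bounds this by `|φ(0)| + |Dφ(0)|² / (2 γ₀)`. Both terms are
dominated by the suprema in the statement, which are finite because `∂Ω × [-M, M]` is compact.
-/

open Set

theorem ContDiff.le_add_deriv_add_half_of_iteratedDeriv_two_le {g : ℝ → ℝ} (hg : ContDiff ℝ 2 g)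
    {K : ℝ} (hK : ∀ s, iteratedDeriv 2 g s ≤ K) : g 1 ≤ g 0 + deriv g 0 + K / 2 := by
  obtain ⟨s, -, hs⟩ :=
    taylor_mean_remainder_lagrange_iteratedDeriv (x₀ := 0) (x := 1) (n := 1) zero_ne_one
      hg.contDiffOn
  have hderiv : derivWithin g (Icc 0 1) 0 = deriv g 0 :=
    (hg.differentiable two_ne_zero 0).derivWithin
      (uniqueDiffOn_Icc zero_lt_one 0 (by simp))
  simp only [zero_le_one, uIcc_of_le, taylorWithinEval_succ, taylor_within_zero_eval] at hs
  norm_num [hderiv] at hs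
  linarith [hK s]

theorem mul_sub_half_mul_sq_le_sq_div {a b γ : ℝ} (hγ : 0 < γ) :
    a * b - γ * b ^ 2 / 2 ≤ a ^ 2 / (2 * γ) := by
  rw [le_div_iff₀ (by positivity)]
  nlinarith [sq_nonneg (a - γ * b)]

theorem ContinuousLinearMap.apply_eq_sum_apply_single_mul {ι : Type*} [Fintype ι] [DecidableEq ι]
    (L : (ι → ℝ) →L[ℝ] ℝ) (v : ι → ℝ) : L v = ∑ i, L (Pi.single i 1) * v i := by
  conv_lhs => rw [← Finset.univ_sum_single v]
  refine (map_sum L _ _).trans (Finset.sum_congr rfl fun i _ => ?_)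
  rw [mul_comm, ← smul_eq_mul, ← map_smul, ← Pi.single_smul', smul_eq_mul, mul_one]

theorem le_sSup_of_isCompact_of_abs_le {X : Type*} [TopologicalSpace X] {s : Set X}
    (hs : IsCompact s) {F : X → ℝ → ℝ} (hF : Continuous fun q : X × ℝ => F q.1 q.2) {M : ℝ}
    {x : X} (hx : x ∈ s) {z : ℝ} (hz : |z| ≤ M) : F x z ≤ sSup {y | ∃ x' ∈ s, ∃ z : ℝ, |z| ≤ M ∧ y = F x' z} := by
  have hbdd : BddAbove ((fun q : X × ℝ => F q.1 q.2) '' (s ×ˢ Icc (-M) M)) :=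
    ((hs.prod isCompact_Icc).image hF).bddAbove
  refine le_csSup (hbdd.mono ?_) ⟨x, hx, z, hz, rfl⟩
  rintro y ⟨x', hx', z', hz', rfl⟩
  exact ⟨(x', z'), ⟨hx', abs_le.mp hz'⟩, rfl⟩

section LineRestriction

variable {E : Type*} [NormedAddCommGroup E] [NormedSpace ℝ E]

theorem DifferentiableAt.hasDerivAt_comp_add_smul {φ : E → ℝ} {q v : E} {t : ℝ}
    (hφ : DifferentiableAt ℝ φ (q + t • v)) :
    HasDerivAt (fun s : ℝ => φ (q + s • v)) (fderiv ℝ φ (q + t • v) v) t :=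
  hφ.hasFDerivAt.comp_hasDerivAt t (((hasDerivAt_id t).smul_const v).const_add q |>.congr_deriv
    (one_smul ℝ v))

theorem Differentiable.apply_add_smul_le_of_le_fderiv {φ : E → ℝ} (hφ : Differentiable ℝ φ)
    {q v : E} {β χ : ℝ} (hβ : ∀ s : ℝ, β ≤ fderiv ℝ φ (q + s • v) v) (hχ : χ ≤ 0) :
    φ (q + χ • v) ≤ φ q + χ * β := by
  have hline := fun t => (hφ (q + t • v)).hasDerivAt_comp_add_smul
  have := mul_sub_le_image_sub_of_le_deriv (fun t => (hline t).differentiableAt)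
    (fun t => (hline t).deriv ▸ hβ t) hχ
  simp only [zero_smul, add_zero, zero_sub] at this
  linarith

theorem ContDiff.apply_add_le_of_iteratedDeriv_two_le {φ : E → ℝ} (hφ : ContDiff ℝ 2 φ)
    {q v : E} {K : ℝ} (hK : ∀ s : ℝ, iteratedDeriv 2 (fun t : ℝ => φ (q + s • v + t • v)) 0 ≤ K) :
    φ (q + v) ≤ φ q + fderiv ℝ φ q v + K / 2 := by
  have hline : ContDiff ℝ 2 fun t : ℝ => φ (q + t • v) := by fun_prop
  have hshift (s : ℝ) : iteratedDeriv 2 (fun t : ℝ => φ (q + t • v)) s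
      = iteratedDeriv 2 (fun t : ℝ => φ (q + s • v + t • v)) 0 := by
    have := congrFun (iteratedDeriv_comp_add_const (n := 2) (f := fun t : ℝ => φ (q + t • v))
      (s := s)) 0
    simp only [zero_add] at this
    rw [← this]
    congr 2
    ext t
    rw [add_smul, add_assoc, add_comm (t • v)]
  have := hline.le_add_deriv_add_half_of_iteratedDeriv_two_le (fun s => hshift s ▸ hK s)
  rw [(hφ.differentiable two_ne_zero (q + 0 • v)).hasDerivAt_comp_add_smul.deriv] at this
  simpa using this

end LineRestriction

theorem ContDiff.continuous_deriv_comp_smul {X Y : Type*} [NormedAddCommGroup X]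
    [NormedSpace ℝ X] [NormedAddCommGroup Y] [NormedSpace ℝ Y] {G : X → ℝ → Y → ℝ}
    (hG : ContDiff ℝ 1 fun q : X × ℝ × Y => G q.1 q.2.1 q.2.2) (v : Y) :
    Continuous fun q : X × ℝ => deriv (fun t : ℝ => G q.1 q.2 (t • v)) 0 := by
  have hpartial (q : X × ℝ) : deriv (fun t : ℝ => G q.1 q.2 (t • v)) 0
      = fderiv ℝ (fun q : X × ℝ × Y => G q.1 q.2.1 q.2.2) (q.1, q.2, 0) (0, 0, v) := by
    have hG' := hG.differentiable one_ne_zero ((q.1, q.2, 0) + (0 : ℝ) • (0, 0, v))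
    simpa using hG'.hasDerivAt_comp_add_smul.deriv
  simp_rw [hpartial]
  exact ((hG.continuous_fderiv one_ne_zero).comp (by fun_prop)).clm_apply continuous_const

theorem ContDiff.neg_le_sum_mul_of_oblique_of_tangentially_concave {ι : Type*} [Fintype ι]
    [DecidableEq ι] {φ : (ι → ℝ) → ℝ} (hφ : ContDiff ℝ 2 φ) {ν : ι → ℝ}
    (hν : ∑ i, ν i ^ 2 = 1) {β γ : ℝ} (hβ : 0 < β) (hγ : 0 < γ)
    (hOB : ∀ p, β ≤ fderiv ℝ φ p ν)
    (hTC : ∀ p τ : ι → ℝ, ∑ i, τ i * ν i = 0 →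
      iteratedDeriv 2 (fun t : ℝ => φ (p + t • τ)) 0 ≤ -γ * ∑ i, τ i ^ 2)
    {p : ι → ℝ} (hp : φ p = 0) :
    -(1 / β * (|φ 0| + √(∑ i, fderiv ℝ φ 0 (Pi.single i 1) ^ 2) ^ 2 / (2 * γ))) ≤
      ∑ i, p i * ν i := by
  set χ := ∑ i, p i * ν i
  set A := √(∑ i, fderiv ℝ φ 0 (Pi.single i 1) ^ 2)
  rcases le_or_gt 0 χ with hχ | hχ
  · have : 0 ≤ 1 / β * (|φ 0| + A ^ 2 / (2 * γ)) := by positivity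
    linarith
  set τ := p - χ • ν
  set T := ∑ i, τ i ^ 2
  have hτν : ∑ i, τ i * ν i = 0 := by
    simp only [τ, Pi.sub_apply, Pi.smul_apply, smul_eq_mul, sub_mul, Finset.sum_sub_distrib,
      mul_assoc, ← Finset.mul_sum, ← sq, hν, mul_one]
    exact sub_self χ
  have hnormal : φ p ≤ φ τ + χ * β := by
    simpa [τ] using (hφ.differentiable two_ne_zero).apply_add_smul_le_of_le_fderiv (q := τ)
      (fun _ => hOB _) hχ.le
  have htangent : φ τ ≤ φ 0 + fderiv ℝ φ 0 τ + -γ * T / 2 := by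
    simpa using hφ.apply_add_le_of_iteratedDeriv_two_le (q := 0) fun _ => hTC _ τ hτν
  have hCS : fderiv ℝ φ 0 τ ≤ A * √T := by
    rw [ContinuousLinearMap.apply_eq_sum_apply_single_mul]
    exact Real.sum_mul_le_sqrt_mul_sqrt _ _ _
  have hAMGM : A * √T - γ * T / 2 ≤ A ^ 2 / (2 * γ) := by
    have := mul_sub_half_mul_sq_le_sq_div (a := A) (b := √T) hγ
    rwa [Real.sq_sqrt (Finset.sum_nonneg fun i _ => sq_nonneg (τ i))] at this
  rw [one_div, ← div_eq_inv_mul, neg_le, le_div_iff₀ hβ]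
  linarith [le_abs_self (φ 0)]

theorem normal_derivative_lower_bound_general
    (n : ℕ) (Ω : Set (EuclideanSpace ℝ (Fin n)))
    (hΩb : Bornology.IsBounded Ω)
    (ν : EuclideanSpace ℝ (Fin n) → Fin n → ℝ)
    (hν : IsUnitInnerNormal n Ω ν)
    (u : EuclideanSpace ℝ (Fin n) → ℝ)
    (M : ℝ) (hM : ∀ x ∈ closure Ω, |u x| ≤ M)
    (G : EuclideanSpace ℝ (Fin n) → ℝ → (Fin n → ℝ) → ℝ)
    (hG : ContDiff ℝ 2 (fun q : EuclideanSpace ℝ (Fin n) × ℝ × (Fin n → ℝ) =>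
        G q.1 q.2.1 q.2.2))
    (β₀ γ₀ : ℝ) (hβ₀ : 0 < β₀) (hγ₀ : 0 < γ₀)
    -- (OB): uniform obliqueness
    (hOB : ∀ x ∈ frontier Ω, ∀ z : ℝ, |z| ≤ M → ∀ p : Fin n → ℝ,
      β₀ ≤ ∑ i, (deriv (fun t : ℝ => G x z (p + t • (Pi.single i 1 : Fin n → ℝ))) 0) * ν x i)
    -- (TC): uniform tangential concavity
    (hTC : ∀ x ∈ frontier Ω, ∀ z : ℝ, |z| ≤ M → ∀ p τ : Fin n → ℝ,
      (∑ i, τ i * ν x i) = 0 →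
      iteratedDeriv 2 (fun t : ℝ => G x z (p + t • τ)) 0 ≤ -γ₀ * ∑ i, τ i ^ 2)
    (x : EuclideanSpace ℝ (Fin n)) (hx : x ∈ frontier Ω)
    (hbc : G x (u x) (pgrad n u x) = 0) :
    -(1 / β₀ *
        (sSup {y : ℝ | ∃ x' ∈ frontier Ω, ∃ z : ℝ, |z| ≤ M ∧ y = |G x' z 0|} +
          (sSup {y : ℝ | ∃ x' ∈ frontier Ω, ∃ z : ℝ, |z| ≤ M ∧
              y = Real.sqrt (∑ i,
                (deriv (fun t : ℝ => G x' z (t • (Pi.single i 1 : Fin n → ℝ))) 0) ^ 2)}) ^ 2 /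
            (2 * γ₀))) ≤
      ∑ i, pgrad n u x i * ν x i := by
  have hz : |u x| ≤ M := hM x (frontier_subset_closure hx)
  have hφ : ContDiff ℝ 2 (G x (u x)) :=
    hG.comp (by fun_prop : ContDiff ℝ 2 fun q : Fin n → ℝ => (x, u x, q))
  have hline (q v : Fin n → ℝ) :
      deriv (fun t : ℝ => G x (u x) (q + t • v)) 0 = fderiv ℝ (G x (u x)) q v :=
    ((hφ.differentiable two_ne_zero) q).lineDeriv_eq_fderiv
  have hOB' (p : Fin n → ℝ) : β₀ ≤ fderiv ℝ (G x (u x)) p (ν x) := by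
    rw [ContinuousLinearMap.apply_eq_sum_apply_single_mul]
    simpa only [hline] using hOB x hx _ hz p
  have hfrontier : IsCompact (frontier Ω) :=
    hΩb.isCompact_closure.of_isClosed_subset isClosed_frontier frontier_subset_closure
  have hS₀ : |G x (u x) 0| ≤ _ :=
    le_sSup_of_isCompact_of_abs_le hfrontier (F := fun x' z => |G x' z 0|) (by fun_prop) hx hz
  have hpartial (i : Fin n) := (hG.of_le one_le_two).continuous_deriv_comp_smul (Pi.single i 1)
  have hS₁ := le_sSup_of_isCompact_of_abs_le hfrontier
    (F := fun x' z => √(∑ i, deriv (fun t : ℝ => G x' z (t • (Pi.single i 1 : Fin n → ℝ))) 0 ^ 2))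
    (by fun_prop) hx hz
  simp only [show ∀ v, deriv (fun t : ℝ => G x (u x) (t • v)) 0 = fderiv ℝ (G x (u x)) 0 v
    from fun v => by simpa using hline 0 v] at hS₁
  calc _ ≤ _ := by gcongr
    _ ≤ _ := hφ.neg_le_sum_mul_of_oblique_of_tangentially_concave (hν.1 x hx) hβ₀ hγ₀ hOB'
      (hTC x hx _ hz) hbc

/-- the boundary normal-derivative lower bound from the
second-order Taylor expansion in the proof of Lemma 4.1. -/
theorem normal_derivative_lower_bound
    (n : ℕ) (Ω : Set (EuclideanSpace ℝ (Fin n)))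
    (hΩo : IsOpen Ω) (hΩb : Bornology.IsBounded Ω)
    (ν : EuclideanSpace ℝ (Fin n) → Fin n → ℝ)
    (hν : IsUnitInnerNormal n Ω ν)
    (u : EuclideanSpace ℝ (Fin n) → ℝ) (hu : ContDiff ℝ 1 u)
    (M : ℝ) (hM : ∀ x ∈ closure Ω, |u x| ≤ M)
    (G : EuclideanSpace ℝ (Fin n) → ℝ → (Fin n → ℝ) → ℝ)
    (hG : ContDiff ℝ 2 (fun q : EuclideanSpace ℝ (Fin n) × ℝ × (Fin n → ℝ) =>
        G q.1 q.2.1 q.2.2))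
    (β₀ γ₀ : ℝ) (hβ₀ : 0 < β₀) (hγ₀ : 0 < γ₀)
    -- (OB): uniform obliqueness
    (hOB : ∀ x ∈ frontier Ω, ∀ z : ℝ, |z| ≤ M → ∀ p : Fin n → ℝ,
      β₀ ≤ ∑ i, (deriv (fun t : ℝ => G x z (p + t • (Pi.single i 1 : Fin n → ℝ))) 0) * ν x i)
    -- (TC): uniform tangential concavity
    (hTC : ∀ x ∈ frontier Ω, ∀ z : ℝ, |z| ≤ M → ∀ p τ : Fin n → ℝ,
      (∑ i, τ i * ν x i) = 0 →
      iteratedDeriv 2 (fun t : ℝ => G x z (p + t • τ)) 0 ≤ -γ₀ * ∑ i, τ i ^ 2)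
    (x : EuclideanSpace ℝ (Fin n)) (hx : x ∈ frontier Ω)
    (hbc : G x (u x) (pgrad n u x) = 0) :
    -(1 / β₀ *
        (sSup {y : ℝ | ∃ x' ∈ frontier Ω, ∃ z : ℝ, |z| ≤ M ∧ y = |G x' z 0|} +
          (sSup {y : ℝ | ∃ x' ∈ frontier Ω, ∃ z : ℝ, |z| ≤ M ∧
              y = Real.sqrt (∑ i,
                (deriv (fun t : ℝ => G x' z (t • (Pi.single i 1 : Fin n → ℝ))) 0) ^ 2)}) ^ 2 /
            (2 * γ₀))) ≤
      ∑ i, pgrad n u x i * ν x i :=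
  normal_derivative_lower_bound_general n Ω hΩb ν hν u M hM G hG β₀ γ₀ hβ₀ hγ₀ hOB hTC x hx hbc
end
end
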